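/- (Stochastic Banach Principle, part ii, commutative case with finite measure.) Let $B$ be a Banach space, $(\Omega,\mu)$ a finite measure space, and $A_n : B \to L^0(\Omega,\mu)$ linear maps, each continuous in measure. Suppose for each $b \in B$, $\lim_{\lambda\to\infty}\sup_n \mu(\{|A_n(b)| > \lambda\}) = 0$. Then there exists $C : \mathbb{R}_+ \to \mathbb{R}_+$ with $\lim_{\lambda\to\infty} C(\lambda) = 0$ such that $\sup_n \mu(\{|A_n(b)| > \lambda \|b\|\}) \leq C(\lambda)$ for every $b \in B$ with $b \neq 0$ and every $\lambda > 0$. -/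

import Mathlib

open MeasureTheory Filter
open scoped ENNReal Topology

/-! Fix `ε > 0`. The points `b` with `μ{|Aₙ b| > λ} ≤ ε` for all `n` and all `λ > m` form a closed
set (continuity in measure), and these sets cover `B` as `m` ranges over `ℕ` (pointwise stochastic
boundedness). By Baire one of them contains a ball `B(b₀, r)`. Every vector of norm `< r` is a
difference of two points of that ball, so `μ{|Aₙ u| > λ} ≤ 2ε` for `‖u‖ < r` and `λ > 2m`, and
rescaling `u` to an arbitrary `b` gives `μ{|Aₙ b| > λ‖b‖} ≤ 2ε` for all `λ > 4m/r`. -/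

theorem measure_lt_abs_le_add {Ω : Type*} [MeasurableSpace Ω] (μ : Measure Ω)
    {f g h : Ω → ℝ} (hfg : ∀ ω, |h ω| ≤ |f ω| + |g ω|) (s t : ℝ) :
    μ {ω | s + t < |h ω|} ≤ μ {ω | s < |f ω|} + μ {ω | t < |g ω|} := by
  refine (measure_mono fun ω hω => ?_).trans (measure_union_le _ _)
  by_contra hnot
  simp only [Set.mem_union, Set.mem_ofPred_eq, not_or, not_lt] at hω hnot
  linarith [hfg ω]

section TailBound

variable {ι B Ω : Type*} [MeasurableSpace Ω] (μ : Measure Ω)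

/-- The paper's `B_c`, intersected over all thresholds above `c`: asking for every `λ > c` rather
than `λ = c` is what makes it closed under convergence in measure. -/
def tailBoundedSet (T : ι → B → Ω → ℝ) (c : ℝ) (ε : ℝ≥0∞) : Set B :=
  {b | ∀ i lam, c < lam → μ {ω | lam < |T i b ω|} ≤ ε}

theorem isClosed_tailBoundedSet [TopologicalSpace B] [SequentialSpace B] {T : ι → B → Ω → ℝ}
    (hcont : ∀ i (b : ℕ → B) (b₀ : B), Tendsto b atTop (𝓝 b₀) →
      ∀ δ > (0 : ℝ), Tendsto (fun k => μ {ω | δ < |T i (b k) ω - T i b₀ ω|}) atTop (𝓝 0))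
    (c : ℝ) (ε : ℝ≥0∞) : IsClosed (tailBoundedSet μ T c ε) := by
  refine IsSeqClosed.isClosed fun b b₀ hb hlim i lam hlam => ?_
  set δ := (lam - c) / 2 with hδ
  have hsplit : ∀ k, μ {ω | lam < |T i b₀ ω|}
      ≤ ε + μ {ω | δ < |T i (b k) ω - T i b₀ ω|} := fun k => by
    calc μ {ω | lam < |T i b₀ ω|} = μ {ω | (c + δ) + δ < |T i b₀ ω|} := by
          congr! 4; ring
      _ ≤ μ {ω | c + δ < |T i (b k) ω|} + μ {ω | δ < |T i (b k) ω - T i b₀ ω|} :=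
          measure_lt_abs_le_add μ (fun ω => by
            linarith [abs_sub_abs_le_abs_sub (T i b₀ ω) (T i (b k) ω),
              abs_sub_comm (T i b₀ ω) (T i (b k) ω)]) _ _
      _ ≤ _ := by gcongr; exact hb k i _ (by linarith)
  have hlim' := (hcont i b b₀ hlim δ (by linarith)).const_add ε
  rw [add_zero] at hlim'
  exact ge_of_tendsto' hlim' hsplit

theorem iUnion_tailBoundedSet_eq_univ {T : ι → B → Ω → ℝ}
    (hpt : ∀ b, Tendsto (fun lam : ℝ => ⨆ i, μ {ω | lam < |T i b ω|}) atTop (𝓝 0))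
    {ε : ℝ≥0∞} (hε : 0 < ε) : ⋃ m : ℕ, tailBoundedSet μ T m ε = Set.univ := by
  refine Set.eq_univ_of_forall fun b => ?_
  obtain ⟨lam, hlam⟩ := (ENNReal.tendsto_nhds_zero.mp (hpt b) ε hε).exists
  refine Set.mem_iUnion.mpr ⟨⌈lam⌉₊, fun i lam' hlam' => ?_⟩
  calc μ {ω | lam' < |T i b ω|} ≤ μ {ω | lam < |T i b ω|} := by
        refine measure_mono fun ω (hω : lam' < _) => ?_
        exact (Nat.le_ceil lam).trans_lt (hlam'.trans hω)
    _ ≤ ε := (le_iSup (fun i => μ {ω | lam < |T i b ω|}) i).trans hlam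

variable [NormedAddCommGroup B] [NormedSpace ℝ B] {A : ι → B →ₗ[ℝ] Ω → ℝ}

theorem sub_mem_tailBoundedSet {b₁ b₂ : B} {c₁ c₂ : ℝ} {ε₁ ε₂ : ℝ≥0∞}
    (h₁ : b₁ ∈ tailBoundedSet μ (fun i => A i) c₁ ε₁)
    (h₂ : b₂ ∈ tailBoundedSet μ (fun i => A i) c₂ ε₂) :
    b₁ - b₂ ∈ tailBoundedSet μ (fun i => A i) (c₁ + c₂) (ε₁ + ε₂) := by
  intro i lam hlam
  set s := c₁ + (lam - c₁ - c₂) / 2 with hs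
  calc μ {ω | lam < |A i (b₁ - b₂) ω|} = μ {ω | s + (lam - s) < |A i (b₁ - b₂) ω|} := by
        congr! 4; ring
    _ ≤ _ := measure_lt_abs_le_add μ (fun ω => by
        simpa only [map_sub, Pi.sub_apply] using abs_sub _ _) _ _
    _ ≤ ε₁ + ε₂ := add_le_add (h₁ i s (by linarith)) (h₂ i _ (by linarith))

theorem smul_mem_tailBoundedSet {b : B} {c t : ℝ} {ε : ℝ≥0∞} (ht : 0 < t)
    (h : b ∈ tailBoundedSet μ (fun i => A i) c ε) :
    t • b ∈ tailBoundedSet μ (fun i => A i) (t * c) ε := by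
  intro i lam hlam
  convert h i (lam / t) (by rwa [lt_div_iff₀' ht]) using 4 with ω
  simp only [map_smul, Pi.smul_apply, smul_eq_mul, abs_mul, abs_of_pos ht, div_lt_iff₀' ht]

theorem measure_lt_mul_norm_le_of_ball_subset {b₀ : B} {r c : ℝ} {ε : ℝ≥0∞} (hr : 0 < r)
    (hball : Metric.ball b₀ r ⊆ tailBoundedSet μ (fun i => A i) c ε)
    (i : ι) (b : B) {lam : ℝ} (hlam : 4 * c / r < lam) :
    μ {ω | lam * ‖b‖ < |A i b ω|} ≤ ε + ε := by
  rcases eq_or_ne b 0 with rfl | hb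
  · simp
  have hnorm : 0 < ‖b‖ := norm_pos_iff.mpr hb
  set u := (r / (2 * ‖b‖)) • b
  have hu : b₀ + u - b₀ ∈ tailBoundedSet μ (fun i => A i) (c + c) (ε + ε) := by
    refine sub_mem_tailBoundedSet μ (hball ?_) (hball (Metric.mem_ball_self hr))
    rw [Metric.mem_ball, dist_self_add_left, norm_smul, Real.norm_of_nonneg (by positivity)]
    field_simp
    linarith
  have hb' := smul_mem_tailBoundedSet μ (by positivity : 0 < 2 * ‖b‖ / r) hu
  rw [add_sub_cancel_left, smul_smul, div_mul_div_cancel₀ (by positivity), div_self (by positivity),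
    one_smul] at hb'
  refine hb' i _ ?_
  calc 2 * ‖b‖ / r * (c + c) = 4 * c / r * ‖b‖ := by ring
    _ < lam * ‖b‖ := by gcongr

theorem exists_uniform_tail_bound [CompleteSpace B]
    (hcont : ∀ i (b : ℕ → B) (b₀ : B), Tendsto b atTop (𝓝 b₀) →
      ∀ δ > (0 : ℝ), Tendsto (fun k => μ {ω | δ < |A i (b k) ω - A i b₀ ω|}) atTop (𝓝 0))
    (hpt : ∀ b, Tendsto (fun lam : ℝ => ⨆ i, μ {ω | lam < |A i b ω|}) atTop (𝓝 0))
    {ε : ℝ≥0∞} (hε : 0 < ε) :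
    ∃ K : ℝ, ∀ lam, K < lam → ∀ i b, μ {ω | lam * ‖b‖ < |A i b ω|} ≤ ε := by
  obtain ⟨m, b₀, hb₀⟩ := nonempty_interior_of_iUnion_of_closed
    (fun m : ℕ => isClosed_tailBoundedSet μ hcont m (ε / 2))
    (iUnion_tailBoundedSet_eq_univ μ hpt (ENNReal.half_pos hε.ne'))
  obtain ⟨r, hr, hball⟩ := Metric.isOpen_iff.mp isOpen_interior b₀ hb₀
  refine ⟨4 * m / r, fun lam hlam i b => ?_⟩
  rw [← ENNReal.add_halves ε]
  exact measure_lt_mul_norm_le_of_ball_subset μ hr (hball.trans interior_subset) i b hlam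

end TailBound

theorem stochastic_banach_principle_ii_general
    {B : Type*} [NormedAddCommGroup B] [NormedSpace ℝ B] [CompleteSpace B]
    {Ω : Type*} [MeasurableSpace Ω] (μ : Measure Ω)
    (A : ℕ → B →ₗ[ℝ] Ω → ℝ)
    -- each `Aₙ` is continuous in measure:
    (hcont : ∀ (n : ℕ) (b : ℕ → B) (b₀ : B), Tendsto b atTop (𝓝 b₀) →
      ∀ ε > (0 : ℝ), Tendsto (fun k => μ {ω | ε < |A n (b k) ω - A n b₀ ω|}) atTop (𝓝 0))
    -- uniform stochastic boundedness at each point: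
    (hpt : ∀ b : B, Tendsto (fun lam : ℝ => ⨆ n, μ {ω | lam < |A n b ω|}) atTop (𝓝 0)) :
    ∃ C : ℝ → ℝ≥0∞, Tendsto C atTop (𝓝 0) ∧
      ∀ (n : ℕ) (b : B), b ≠ 0 → ∀ lam : ℝ, 0 < lam →
        μ {ω | lam * ‖b‖ < |A n b ω|} ≤ C lam := by
  refine ⟨fun lam => ⨆ (n) (b : B), μ {ω | lam * ‖b‖ < |A n b ω|}, ?_,
    fun n b _ lam _ => le_iSup₂ (f := fun n (b : B) => μ {ω | lam * ‖b‖ < |A n b ω|}) n b⟩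
  refine ENNReal.tendsto_nhds_zero.mpr fun ε hε => ?_
  obtain ⟨K, hK⟩ := exists_uniform_tail_bound μ hcont hpt hε
  filter_upwards [eventually_gt_atTop K] with lam hlam
  exact iSup₂_le (hK lam hlam)

/-- (Stochastic Banach principle, part ii, commutative case, finite
measure.)  Let `B` be a Banach space, `(Ω, μ)` a finite measure space, and
`Aₙ : B → L⁰(Ω, μ)` linear maps, each continuous in measure.  If for each `b`
`sup_n μ{|Aₙ(b)| > λ} → 0` as `λ → ∞`, then there is `C : ℝ₊ → ℝ≥0∞` with
`C(λ) → 0` as `λ → ∞` and `sup_n μ{|Aₙ(b)| > λ‖b‖} ≤ C(λ)` for all `b ≠ 0`, `λ > 0`. -/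
theorem stochastic_banach_principle_ii
    {B : Type*} [NormedAddCommGroup B] [NormedSpace ℝ B] [CompleteSpace B]
    {Ω : Type*} [MeasurableSpace Ω] (μ : Measure Ω) [IsFiniteMeasure μ]
    (A : ℕ → B →ₗ[ℝ] Ω → ℝ)
    (hmeas : ∀ n b, Measurable (A n b))
    -- each `Aₙ` is continuous in measure:
    (hcont : ∀ (n : ℕ) (b : ℕ → B) (b₀ : B), Tendsto b atTop (𝓝 b₀) →
      ∀ ε > (0 : ℝ), Tendsto (fun k => μ {ω | ε < |A n (b k) ω - A n b₀ ω|}) atTop (𝓝 0))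
    -- uniform stochastic boundedness at each point:
    (hpt : ∀ b : B, Tendsto (fun lam : ℝ => ⨆ n, μ {ω | lam < |A n b ω|}) atTop (𝓝 0)) :
    ∃ C : ℝ → ℝ≥0∞, Tendsto C atTop (𝓝 0) ∧
      ∀ (n : ℕ) (b : B), b ≠ 0 → ∀ lam : ℝ, 0 < lam →
        μ {ω | lam * ‖b‖ < |A n b ω|} ≤ C lam :=
  stochastic_banach_principle_ii_general μ A hcont hpt
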